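/- Every factor of w of length 2 is a factor of the word u₀ = 23141121142; moreover w has exactly 8 distinct factors of length 2. -/

import Mathlib

/-- The four-letter alphabet `A₄ = {1,2,3,4}`; the value `k : Fin 4` represents letter `k+1`. -/
abbrev A4 := Fin 4

/-- The morphism `f` on letters: `f(1)=121, f(2)=123, f(3)=141, f(4)=142`
(letters `1,2,3,4` encoded as `0,1,2,3`). -/
def fm : A4 → List A4
  | 0 => [0, 1, 0]
  | 1 => [0, 1, 2]
  | 2 => [0, 3, 0]
  | 3 => [0, 3, 1]

/-- The morphism `f` extended to words by concatenation. -/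
def fw (u : List A4) : List A4 := u.flatMap fm

/-- The fixed point `w` of `f` starting with the letter `1`: since `|f^k(1)| = 3^k` and each
`f^k(1)` is a prefix of `f^(k+1)(1)`, the `n`-th letter of `w` is the `n`-th letter of
`f^(n+1)(1)`. -/
def w (n : ℕ) : A4 := ((fw^[n + 1]) [0]).getD n 0

/-- The finite word `t` occurs at position `i` in the infinite word `x`. -/
def OccursAt {α : Type*} (t : List α) (x : ℕ → α) (i : ℕ) : Prop :=
  t = (List.range t.length).map fun k => x (i + k)

/-- The finite word `v` is a factor of the infinite word `x`. -/
def FactorOf {α : Type*} (v : List α) (x : ℕ → α) : Prop :=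
  ∃ i, OccursAt v x i

/-- The finite word `v` has period `q ≥ 1`: `v(j) = v(j+q)` whenever `0 ≤ j < |v| - q`. -/
def HasPeriod {α : Type*} (v : List α) (q : ℕ) : Prop :=
  1 ≤ q ∧ ∀ j, j + q < v.length → v[j]? = v[j + q]?

/-- A word lies in `ker ψ` if each letter of `A₄` occurs in it a number of times
divisible by `4`. -/
def InKerPsi (u : List A4) : Prop := ∀ a : A4, 4 ∣ u.count a

/-- `q` is a kernel period of `v`: `1 ≤ q ≤ |v|`, `v` has period `q`, and the prefix of `v`
of length `q` lies in `ker ψ`. -/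
def KernelPeriod (v : List A4) (q : ℕ) : Prop :=
  q ≤ v.length ∧ HasPeriod v q ∧ InKerPsi (v.take q)

/-! The letter `w (3j + r)` is the `r`-th letter of `f (w j)`, so every length-2 factor of `w`
lies inside `f (a b)` for two letters `a`, `b`. Since every image `f b` starts with `1`, the
length-2 factors of the words `f (a b)` are the two-letter factors of the images `f a` together
with the pairs `x 1` where `x` is the last letter of some `f a`: eight words in total, all of
which already occur in the prefix `f⁴(1)` of `w`. -/

namespace List

variable {α β : Type*}

theorem length_flatMap_of_length_eq {g : α → List β} {k : ℕ} (hg : ∀ a, (g a).length = k)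
    (u : List α) : (u.flatMap g).length = k * u.length := by
  simp [length_flatMap, hg, mul_comm]

theorem getD_flatMap_of_length_eq {g : α → List β} {k : ℕ} (hg : ∀ a, (g a).length = k)
    (u : List α) {n : ℕ} (hn : n < k * u.length) (a₀ : α) (b₀ : β) :
    (u.flatMap g).getD n b₀ = (g (u.getD (n / k) a₀)).getD (n % k) b₀ := by
  induction u generalizing n with
  | nil => simp at hn
  | cons a u ih =>
    rw [flatMap_cons]
    rcases lt_or_ge n k with hnk | hkn
    · rw [getD_append _ _ _ _ (by rwa [hg]), Nat.div_eq_of_lt hnk, Nat.mod_eq_of_lt hnk]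
      rfl
    · rw [getD_append_right _ _ _ _ (by rwa [hg]), hg,
        ih (by rw [length_cons, Nat.mul_succ] at hn; omega)]
      obtain ⟨m, rfl⟩ := Nat.exists_eq_add_of_le hkn
      have hk : 0 < k := Nat.pos_of_ne_zero (by rintro rfl; simp at hn)
      rw [Nat.add_sub_cancel_left, Nat.add_div_left _ hk, Nat.add_mod_left]
      rfl

end List

theorem fm_length (a : A4) : (fm a).length = 3 := by
  fin_cases a <;> rfl

theorem fw_iterate_length (k : ℕ) : (fw^[k] [0]).length = 3 ^ k := by
  induction k with
  | zero => rfl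
  | succ k ih =>
    rw [Function.iterate_succ_apply', fw, List.length_flatMap_of_length_eq fm_length, ih,
      pow_succ, mul_comm]

theorem fw_iterate_prefix {a b : ℕ} (h : a ≤ b) : fw^[a] [0] <+: fw^[b] [0] := by
  have step : ∀ k, fw^[k] [0] <+: fw^[k + 1] [0] := by
    intro k
    induction k with
    | zero => exact ⟨[1, 0], rfl⟩
    | succ k ih =>
      rw [Function.iterate_succ_apply' _ k, Function.iterate_succ_apply' _ (k + 1)]
      exact ih.flatMap fm
  induction b, h using Nat.le_induction with
  | base => exact List.prefix_refl _
  | succ b _ ih => exact ih.trans (step b)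

theorem w_eq_getD_iterate {m n : ℕ} (h : n < 3 ^ m) : w n = (fw^[m] [0]).getD n 0 := by
  have hn : n < 3 ^ (n + 1) := (Nat.lt_pow_self (by norm_num)).trans
    (Nat.pow_lt_pow_succ (by norm_num))
  obtain ⟨t, ht⟩ | ⟨t, ht⟩ := (le_total m (n + 1)).imp fw_iterate_prefix fw_iterate_prefix <;>
    rw [w, ← ht, List.getD_append _ _ _ _ (by rwa [fw_iterate_length])]

theorem w_eq_getD_fm (n : ℕ) : w n = (fm (w (n / 3))).getD (n % 3) 0 := by
  have hn : n / 3 < 3 ^ n := (Nat.div_le_self n 3).trans_lt (Nat.lt_pow_self (by norm_num))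
  rw [w_eq_getD_iterate (m := n + 1) (by rw [pow_succ]; omega), w_eq_getD_iterate hn,
    Function.iterate_succ_apply', fw,
    List.getD_flatMap_of_length_eq fm_length _ (by rw [fw_iterate_length, mul_comm]; omega)]

theorem w_three_mul_add (j : ℕ) {r : ℕ} (hr : r < 6) :
    w (3 * j + r) = (fw [w j, w (j + 1)]).getD r 0 := by
  rw [w_eq_getD_fm, fw, List.getD_flatMap_of_length_eq fm_length _ (by simpa) 0,
    Nat.mul_add_div (by norm_num), Nat.mul_add_mod]
  obtain h | h : r / 3 = 0 ∨ r / 3 = 1 := by omega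
  all_goals simp [h]

theorem FactorOf.exists_eq_pair {α : Type*} {v : List α} {x : ℕ → α} (hv : FactorOf v x)
    (hl : v.length = 2) : ∃ i, v = [x i, x (i + 1)] := by
  obtain ⟨i, hi⟩ := hv
  rw [hi, hl]
  exact ⟨i, by simp [List.range_succ]⟩

theorem factorOf_of_infix_iterate {v : List A4} {m : ℕ} (h : v <:+: fw^[m] [0]) :
    FactorOf v w := by
  obtain ⟨s, t, hst⟩ := h
  refine ⟨s.length, List.ext_getElem (by simp) fun k hk _ => ?_⟩
  have hlen : s.length + k < 3 ^ m := by
    rw [← fw_iterate_length m, ← hst]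
    simp only [List.length_append]
    omega
  rw [List.getElem_map, List.getElem_range, w_eq_getD_iterate hlen, ← hst, List.append_assoc,
    List.getD_append_right _ _ _ _ (by omega), Nat.add_sub_cancel_left,
    List.getD_append _ _ _ _ hk, List.getD_eq_getElem]

def lengthTwoFactors : List (List A4) :=
  [[0, 1], [1, 0], [0, 0], [1, 2], [2, 0], [0, 3], [3, 0], [3, 1]]

theorem pair_getD_fw_mem_lengthTwoFactors :
    ∀ a b : A4, ∀ r < 5,
      [(fw [a, b]).getD r 0, (fw [a, b]).getD (r + 1) 0] ∈ lengthTwoFactors := by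
  decide

theorem pair_w_mem_lengthTwoFactors (i : ℕ) : [w i, w (i + 1)] ∈ lengthTwoFactors := by
  obtain ⟨j, r, hr, rfl⟩ : ∃ j r, r < 3 ∧ i = 3 * j + r :=
    ⟨i / 3, i % 3, Nat.mod_lt _ (by norm_num), (Nat.div_add_mod i 3).symm⟩
  rw [add_assoc, w_three_mul_add j (by omega), w_three_mul_add j (by omega)]
  exact pair_getD_fw_mem_lengthTwoFactors _ _ r (by omega)

theorem factorOf_w_and_length_eq_two_iff {v : List A4} :
    FactorOf v w ∧ v.length = 2 ↔ v ∈ lengthTwoFactors := by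
  constructor
  · rintro ⟨hv, hl⟩
    obtain ⟨i, rfl⟩ := hv.exists_eq_pair hl
    exact pair_w_mem_lengthTwoFactors i
  · intro hv
    have hinfix : ∀ v ∈ lengthTwoFactors, v <:+: fw^[4] [0] ∧ v.length = 2 := by decide
    exact (hinfix v hv).imp_left factorOf_of_infix_iterate

/-- Every factor of `w` of length 2 is a factor of `u₀ = 23141121142` (encoded with letters
`1,2,3,4` as `0,1,2,3`), and `w` has exactly 8 distinct factors of length 2. -/
theorem stmt13 :
    (∀ v : List A4, FactorOf v w → v.length = 2 →
      v <:+: ([1, 2, 0, 3, 0, 0, 1, 0, 0, 3, 1] : List A4)) ∧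
    {v : List A4 | FactorOf v w ∧ v.length = 2}.ncard = 8 := by
  have hset : {v : List A4 | FactorOf v w ∧ v.length = 2} = ↑lengthTwoFactors.toFinset := by
    ext v
    simpa using factorOf_w_and_length_eq_two_iff
  refine ⟨fun v hv hl => ?_, by rw [hset, Set.ncard_coe_finset]; decide⟩
  have hinfix :
      ∀ v ∈ lengthTwoFactors, v <:+: ([1, 2, 0, 3, 0, 0, 1, 0, 0, 3, 1] : List A4) := by
    decide
  exact hinfix v (factorOf_w_and_length_eq_two_iff.mp ⟨hv, hl⟩)
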